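/- arXiv:1701.08853 — 3 statements merged into one kernel-verified Lean document; each statement's English description precedes it below -/
import Mathlib

section
/- Let F be a free group and let x, y ∈ F be nontrivial elements. If x^m = y^n for some integers m, n ≥ 2 (in fact for any m, n ≥ 1), then x and y commute. -/
/-!
`x` commutes with `x ^ m = y ^ n`, so conjugating by `x` fixes `y ^ n`, i.e. `(x y x⁻¹) ^ n = y ^ n`.
Free groups have unique roots (`IsMulTorsionFree`: `n`-th powers are injective for `n ≠ 0`),
hence `x y x⁻¹ = y`.
-/

theorem Commute.of_pow_right {G : Type*} [Group G] [IsMulTorsionFree G] {a b : G} {n : ℕ}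
    (hn : n ≠ 0) (h : Commute a (b ^ n)) : Commute a b := by
  have hconj : (a * b * a⁻¹) ^ n = b ^ n := by rw [conj_pow, h.eq, mul_inv_cancel_right]
  exact mul_inv_eq_iff_eq_mul.mp (pow_left_injective hn hconj)

theorem stmt_0_general {α : Type*} (x y : FreeGroup α)
    (m n : ℕ) (hn : 1 ≤ n) (h : x ^ m = y ^ n) :
    Commute x y :=
  Commute.of_pow_right (Nat.one_le_iff_ne_zero.mp hn) (h ▸ Commute.self_pow x m)

/-- In a free group, if nontrivial elements satisfy `x^m = y^n` with `m, n ≥ 1`,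
then `x` and `y` commute. -/
theorem stmt_0 {α : Type*} (x y : FreeGroup α) (hx : x ≠ 1) (hy : y ≠ 1)
    (m n : ℕ) (hm : 1 ≤ m) (hn : 1 ≤ n) (h : x ^ m = y ^ n) :
    Commute x y :=
  stmt_0_general x y m n hn h
end

section
/- In a free group F, roots are unique: if x, y ∈ F and x^n = y^n for some integer n ≥ 1, then x = y. -/
/-- Roots are unique in free groups: `x^n = y^n` with `n ≥ 1` implies `x = y`. -/
theorem stmt_2 {α : Type*} (x y : FreeGroup α) (n : ℕ) (hn : 1 ≤ n)
    (h : x ^ n = y ^ n) : x = y :=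
  pow_left_injective (Nat.one_le_iff_ne_zero.mp hn) h
end

section
/- Let F be the free group on two generators x, y, and let n₁, n₂ be positive integers. Then the elements z₁ = x^{n₂}, z₂ = y·x^{-n₁}·y⁻¹, a = x^{n₁ n₂}, b = y satisfy: z₁ ≠ 1, z₂ ≠ 1, z₁^{n₁} · z₂^{n₂} = a·b·a⁻¹·b⁻¹, and the subgroup generated by {z₁, z₂, a, b} is not cyclic. -/
/-!
The identity is the word computation `x^{n₁n₂} · y x^{-n₁n₂} y⁻¹ = [x^{n₁n₂}, y]`, and `z₁`, `z₂`
are nontrivial because free groups are torsion-free. The subgroup is not cyclic because `x^{n₂}`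
and `y` do not commute: sending `x` to a rotation and `y` to a reflection of the infinite dihedral
group, their images commute only when the rotation is trivial.
-/

theorem Subgroup.not_isCyclic_closure_of_not_commute {G : Type*} [Group G] {s : Set G}
    {g h : G} (hg : g ∈ s) (hh : h ∈ s) (hgh : ¬Commute g h) : ¬IsCyclic (closure s) := by
  intro hcyc
  let := hcyc.commGroup
  exact hgh (congrArg Subtype.val (mul_comm (⟨g, subset_closure hg⟩ : closure s)
    ⟨h, subset_closure hh⟩))

open DihedralGroup in
theorem FreeGroup.not_commute_zpow_of_of {α : Type*} {a b : α} (hab : a ≠ b) {n : ℤ}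
    (hn : n ≠ 0) : ¬Commute (of a ^ n) (of b) := by
  classical
  let f : FreeGroup α →* DihedralGroup 0 := lift fun c => if c = a then r 1 else sr 0
  intro hcomm
  have himage := (hcomm.map f).eq
  simp only [f, map_zpow, lift_apply_of, ↓reduceIte, hab.symm, r_zpow, one_mul, r_mul_sr,
    sr_mul_r, zero_sub, zero_add, sr.injEq] at himage
  have hneg : -n = n := himage
  lia

/-- In the free group on two generators `x, y`, the elements
`z₁ = x^{n₂}`, `z₂ = y x^{-n₁} y⁻¹`, `a = x^{n₁ n₂}`, `b = y` are nontrivial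
(for `z₁, z₂`), satisfy `z₁^{n₁} z₂^{n₂} = [a,b]`, and generate a
non-cyclic subgroup. -/
theorem stmt_5 (n₁ n₂ : ℕ) (h₁ : 0 < n₁) (h₂ : 0 < n₂) :
    let x : FreeGroup Bool := FreeGroup.of true
    let y : FreeGroup Bool := FreeGroup.of false
    let z₁ := x ^ n₂
    let z₂ := y * x ^ (-(n₁ : ℤ)) * y⁻¹
    let a := x ^ (n₁ * n₂)
    let b := y
    z₁ ≠ 1 ∧ z₂ ≠ 1 ∧ z₁ ^ n₁ * z₂ ^ n₂ = a * b * a⁻¹ * b⁻¹ ∧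
      ¬ IsCyclic (Subgroup.closure ({z₁, z₂, a, b} : Set (FreeGroup Bool))) := by
  intro x y z₁ z₂ a b
  have hx : x ≠ 1 := FreeGroup.of_ne_one true
  refine ⟨(pow_eq_one_iff_left h₂.ne').not.mpr hx, ?_, ?_, ?_⟩
  · exact conj_eq_one_iff.not.mpr (by simpa [h₁.ne'] using hx)
  · simp only [z₁, z₂, a, b, conj_pow]
    group
  · refine Subgroup.not_isCyclic_closure_of_not_commute (g := z₁) (h := b) (by simp) (by simp) ?_
    simpa using FreeGroup.not_commute_zpow_of_of (by decide) (n := n₂) (by positivity)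
end
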